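/- Let G be the group with generators α_1,…,α_n and relations α_p α_q α_p^{-1} = α_q^{ε(p,q)} for p < q, where ε(p,q) = 1 if c_{p,q} = 0 and ε(p,q) = -1 if c_{p,q} = 1. Then G is solvable of derived length at most 2, i.e. the commutator subgroup [G,G] is abelian. -/

import Mathlib

/-!
Let `N` be the normal closure of the squares `αᵢ²` of the generators. Each relation says that
`α_p` conjugates `α_q` to `α_q^{±1}`; hence `α_p` conjugates `α_q²` to `α_q^{±2}`, and `α_q`
commutes with `α_p²`. So conjugation by any element sends `αᵢ²` to `αᵢ^{±2}`, and the squares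
commute pairwise, which makes `N` abelian. Modulo `N` the generators are involutions, so the
relations make them commute: `G ⧸ N` is abelian and `[G, G] ≤ N`.
-/

/-- Relators for the fundamental group of the real Bott tower: for `p < q`,
`α_p α_q α_p⁻¹ α_q^{-ε(p,q)}`, encoding `α_p α_q α_p⁻¹ = α_q^{ε(p,q)}` with
`ε(p,q) = 1` if `c p q = 0` and `ε(p,q) = -1` if `c p q = 1`. -/
def bottRels (n : ℕ) (c : Fin n → Fin n → ZMod 2) : Set (FreeGroup (Fin n)) :=
  {w | ∃ p q : Fin n, p < q ∧
    w = (if c p q = 0 then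
          FreeGroup.of p * FreeGroup.of q * (FreeGroup.of p)⁻¹ * (FreeGroup.of q)⁻¹
        else
          FreeGroup.of p * FreeGroup.of q * (FreeGroup.of p)⁻¹ * FreeGroup.of q)}

open Subgroup

open scoped commutatorElement

section ConjSelfOrInv

variable {G : Type*} [Group G]

def conjSelfOrInv (s : G) : Subgroup G where
  carrier := {g | g * s * g⁻¹ = s ∨ g * s * g⁻¹ = s⁻¹}
  one_mem' := by simp
  mul_mem' := by
    rintro g h hg hh
    have hconj : g * h * s * (g * h)⁻¹ = g * (h * s * h⁻¹) * g⁻¹ := by group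
    simp only [Set.mem_ofPred_eq, hconj]
    rcases hh with hh | hh <;> rw [hh]
    · exact hg
    · rw [← conj_inv, inv_inj, inv_eq_iff_eq_inv]
      exact hg.symm
  inv_mem' := by
    rintro g (hg | hg)
    · left
      calc g⁻¹ * s * g⁻¹⁻¹ = g⁻¹ * (g * s * g⁻¹) * g := by rw [hg, inv_inv]
        _ = s := by group
    · right
      calc g⁻¹ * s * g⁻¹⁻¹ = g⁻¹ * (g * s * g⁻¹)⁻¹ * g := by rw [hg, inv_inv, inv_inv]
        _ = s⁻¹ := by group

variable {g s : G}

theorem Commute.mem_conjSelfOrInv (h : Commute g s) : g ∈ conjSelfOrInv s :=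
  Or.inl (by rw [h.eq, mul_inv_cancel_right])

theorem mem_conjSelfOrInv_pow (h : g ∈ conjSelfOrInv s) (k : ℕ) : g ∈ conjSelfOrInv (s ^ k) := by
  rcases h with h | h
  · exact Or.inl (by rw [← conj_pow, h])
  · exact Or.inr (by rw [← conj_pow, h, inv_pow])

theorem commute_sq_of_mem_conjSelfOrInv (h : g ∈ conjSelfOrInv s) : Commute s (g ^ 2) := by
  rcases h with h | h
  · have : Commute g s := by rwa [mul_inv_eq_iff_eq_mul] at h
    exact (this.pow_left 2).symm
  · calc s * g ^ 2 = (g * s * g⁻¹)⁻¹ * g ^ 2 := by rw [h, inv_inv]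
      _ = g * s⁻¹ * g := by group
      _ = g * (g * s * g⁻¹) * g := by rw [h]
      _ = g ^ 2 * s := by rw [pow_two]; group

theorem commutatorElement_of_mem_conjSelfOrInv (h : g ∈ conjSelfOrInv s) :
    ⁅g, s⁆ = 1 ∨ ⁅g, s⁆ = (s ^ 2)⁻¹ := by
  rw [commutatorElement_def]
  rcases h with h | h <;> rw [h]
  · exact Or.inl (mul_inv_cancel s)
  · exact Or.inr (by group)

theorem commutatorElement_mem_of_mem_conjSelfOrInv {N : Subgroup G} (h : g ∈ conjSelfOrInv s)
    (hs : s ^ 2 ∈ N) : ⁅g, s⁆ ∈ N := by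
  rcases commutatorElement_of_mem_conjSelfOrInv h with h | h <;> rw [h]
  · exact N.one_mem
  · exact N.inv_mem hs

end ConjSelfOrInv

section Generators

variable {G : Type*} [Group G] {T : Set G}

theorem conjugatesOfSet_subset_union_inv {S : Set G} (hT : closure T = ⊤)
    (hconj : ∀ t ∈ T, ∀ s ∈ S, t ∈ conjSelfOrInv s) : Group.conjugatesOfSet S ⊆ S ∪ S⁻¹ := by
  intro x hx
  obtain ⟨s, hs, hsx⟩ := Group.mem_conjugatesOfSet_iff.mp hx
  obtain ⟨g, rfl⟩ := isConj_iff.mp hsx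
  have hg : g ∈ conjSelfOrInv s := by
    have : closure T ≤ conjSelfOrInv s := (closure_le _).mpr fun t ht ↦ hconj t ht s hs
    exact this (hT ▸ mem_top g)
  rcases hg with hg | hg <;> rw [hg]
  · exact Or.inl hs
  · exact Or.inr (Set.inv_mem_inv.mpr hs)

theorem isMulCommutative_normalClosure {S : Set G} (hT : closure T = ⊤)
    (hconj : ∀ t ∈ T, ∀ s ∈ S, t ∈ conjSelfOrInv s) (hcomm : ∀ x ∈ S, ∀ y ∈ S, Commute x y) :
    IsMulCommutative (normalClosure S) := by
  have hcomm' : ∀ x ∈ S ∪ S⁻¹, ∀ y ∈ S ∪ S⁻¹, Commute x y := by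
    rintro x (hx | hx) y (hy | hy)
    · exact hcomm x hx y hy
    · exact Commute.inv_right_iff.mp (hcomm x hx _ hy)
    · exact Commute.inv_left_iff.mp (hcomm _ hx y hy)
    · exact Commute.inv_inv_iff.mp (hcomm _ hx _ hy)
  exact isMulCommutative_closure fun x hx y hy ↦
    hcomm' x (conjugatesOfSet_subset_union_inv hT hconj hx)
      y (conjugatesOfSet_subset_union_inv hT hconj hy)

theorem commutator_le_of_closure_eq_top {N : Subgroup G} [N.Normal] (hT : closure T = ⊤)
    (h : ∀ x ∈ T, ∀ y ∈ T, ⁅x, y⁆ ∈ N) : commutator G ≤ N := by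
  rw [← Normal.quotient_commutative_iff_commutator_le]
  have hT' : closure (QuotientGroup.mk' N '' T) = ⊤ := by
    rw [← MonoidHom.map_closure, hT, ← MonoidHom.range_eq_map, QuotientGroup.range_mk']
  have : IsMulCommutative (closure (QuotientGroup.mk' N '' T)) := isMulCommutative_closure <| by
    rintro _ ⟨x, hx, rfl⟩ _ ⟨y, hy, rfl⟩
    rw [← commutatorElement_eq_one_iff_mul_comm, ← map_commutatorElement,
      QuotientGroup.mk'_apply, QuotientGroup.eq_one_iff]
    exact h x hx y hy
  exact ⟨⟨fun x y ↦ setLike_mul_comm (hT'.ge (mem_top x)) (hT'.ge (mem_top y))⟩⟩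

theorem isMulCommutative_commutator_of_conjSelfOrInv {ι : Type*} {a : ι → G}
    (hgen : closure (Set.range a) = ⊤)
    (hrel : ∀ i j, a i ∈ conjSelfOrInv (a j) ∨ a j ∈ conjSelfOrInv (a i)) :
    IsMulCommutative (commutator G) := by
  let N := normalClosure (Set.range fun i ↦ a i ^ 2)
  have hsq (i : ι) : a i ^ 2 ∈ N := subset_normalClosure ⟨i, rfl⟩
  have hle : commutator G ≤ N := by
    refine commutator_le_of_closure_eq_top hgen ?_
    rintro _ ⟨i, rfl⟩ _ ⟨j, rfl⟩
    rcases hrel i j with h | h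
    · exact commutatorElement_mem_of_mem_conjSelfOrInv h (hsq j)
    · rw [← commutatorElement_inv]
      exact N.inv_mem (commutatorElement_mem_of_mem_conjSelfOrInv h (hsq i))
  have hN : IsMulCommutative N := by
    refine isMulCommutative_normalClosure hgen ?_ ?_
    · rintro _ ⟨i, rfl⟩ _ ⟨j, rfl⟩
      rcases hrel i j with h | h
      · exact mem_conjSelfOrInv_pow h 2
      · exact (commute_sq_of_mem_conjSelfOrInv h).mem_conjSelfOrInv
    · rintro _ ⟨i, rfl⟩ _ ⟨j, rfl⟩
      rcases hrel i j with h | h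
      · exact ((commute_sq_of_mem_conjSelfOrInv h).pow_left 2).symm
      · exact (commute_sq_of_mem_conjSelfOrInv h).pow_left 2
  exact .of_setLike_mul_comm fun _ hx _ hy ↦ setLike_mul_comm (hle hx) (hle hy)

end Generators

section Bott

variable {n : ℕ} {c : Fin n → Fin n → ZMod 2}

theorem bottRels.of_mem_conjSelfOrInv_of_lt {p q : Fin n} (h : p < q) :
    (PresentedGroup.of p : PresentedGroup (bottRels n c)) ∈
      conjSelfOrInv (PresentedGroup.of q) := by
  have hrel := PresentedGroup.one_of_mem (rels := bottRels n c) ⟨p, q, h, rfl⟩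
  split_ifs at hrel <;> simp only [map_mul, map_inv] at hrel
  · exact Or.inl (mul_inv_eq_one.mp hrel)
  · exact Or.inr (eq_inv_of_mul_eq_one_left hrel)

theorem bottRels.of_mem_conjSelfOrInv (p q : Fin n) :
    (PresentedGroup.of p : PresentedGroup (bottRels n c)) ∈ conjSelfOrInv (PresentedGroup.of q) ∨
      (PresentedGroup.of q : PresentedGroup (bottRels n c)) ∈
        conjSelfOrInv (PresentedGroup.of p) := by
  rcases lt_trichotomy p q with h | rfl | h
  · exact Or.inl (of_mem_conjSelfOrInv_of_lt h)
  · exact Or.inl (Commute.refl _).mem_conjSelfOrInv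
  · exact Or.inr (of_mem_conjSelfOrInv_of_lt h)

end Bott

/-- The fundamental group of a real Bott tower is solvable of derived length at
most 2: its commutator subgroup is abelian. -/
theorem stmt_16 (n : ℕ) (c : Fin n → Fin n → ZMod 2)
    (x y : PresentedGroup (bottRels n c))
    (hx : x ∈ commutator (PresentedGroup (bottRels n c)))
    (hy : y ∈ commutator (PresentedGroup (bottRels n c))) :
    x * y = y * x :=
  have : IsMulCommutative (commutator (PresentedGroup (bottRels n c))) :=
    isMulCommutative_commutator_of_conjSelfOrInv (PresentedGroup.closure_range_of _)
      bottRels.of_mem_conjSelfOrInv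
  setLike_mul_comm hx hy
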